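/- For integers 0 ≤ k ≤ n/2, the sum of binomial coefficients satisfies ∑_{i=0}^{k} C(n, i) ≤ 2^{H(k/n)·n}, where H(p) = p·log₂(1/p) + (1−p)·log₂(1/(1−p)) is the binary entropy function. -/

import Mathlib

/-- The binary entropy function `H(p) = -p log₂ p - (1-p) log₂ (1-p)`
(with the convention `H(0) = H(1) = 0`, which holds since `Real.logb 2 0 = 0`). -/
noncomputable def binEnt (p : ℝ) : ℝ :=
  -(p * Real.logb 2 p) - (1 - p) * Real.logb 2 (1 - p)

/-!
Expand `1 = (p + (1 - p))^n` with `p = k/n`. Since `p ≤ 1 - p`, each of the terms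
`C(n, i) p^i (1-p)^(n-i)` with `i ≤ k` is at least `C(n, i) p^k (1-p)^(n-k)`, so
`∑_{i ≤ k} C(n, i) ≤ (p^k (1-p)^(n-k))⁻¹`, and the right-hand side is exactly `2^(H(p) n)`.
-/

open Finset

lemma pow_mul_pow_sub_le_pow_mul_pow_sub {R : Type*} [CommSemiring R] [PartialOrder R]
    [IsOrderedRing R] {a b : R} (ha : 0 ≤ a) (hab : a ≤ b) {i k n : ℕ} (hik : i ≤ k)
    (hkn : k ≤ n) :
    a ^ k * b ^ (n - k) ≤ a ^ i * b ^ (n - i) := by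
  have hb : 0 ≤ b := ha.trans hab
  calc a ^ k * b ^ (n - k) = a ^ i * b ^ (n - k) * a ^ (k - i) := by
        rw [mul_right_comm, ← pow_add, Nat.add_sub_cancel' hik]
    _ ≤ a ^ i * b ^ (n - k) * b ^ (k - i) := by gcongr
    _ = a ^ i * b ^ (n - i) := by
        rw [mul_assoc, ← pow_add, Nat.sub_add_sub_cancel hkn hik]

lemma sum_range_choose_mul_pow_le_one {R : Type*} [CommSemiring R] [PartialOrder R]
    [IsOrderedRing R] {a b : R} (ha : 0 ≤ a) (hab : a ≤ b) (hsum : a + b = 1) {k n : ℕ}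
    (hkn : k ≤ n) :
    (∑ i ∈ range (k + 1), (n.choose i : R)) * (a ^ k * b ^ (n - k)) ≤ 1 := by
  have hb : 0 ≤ b := ha.trans hab
  calc (∑ i ∈ range (k + 1), (n.choose i : R)) * (a ^ k * b ^ (n - k))
      = ∑ i ∈ range (k + 1), a ^ k * b ^ (n - k) * n.choose i := by
        rw [sum_mul]; simp_rw [mul_comm]
    _ ≤ ∑ i ∈ range (k + 1), a ^ i * b ^ (n - i) * n.choose i := by
        refine sum_le_sum fun i hi ↦ mul_le_mul_of_nonneg_right ?_ (Nat.cast_nonneg _)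
        exact pow_mul_pow_sub_le_pow_mul_pow_sub ha hab (Nat.lt_succ_iff.mp (mem_range.mp hi)) hkn
    _ ≤ ∑ i ∈ range (n + 1), a ^ i * b ^ (n - i) * n.choose i :=
        sum_le_sum_of_subset_of_nonneg (range_subset_range.mpr (by omega))
          fun _ _ _ ↦ by positivity
    _ = 1 := by rw [← add_pow, hsum, one_pow]

lemma two_rpow_neg_mul_logb {x : ℝ} (hx : 0 < x) (c : ℝ) :
    (2 : ℝ) ^ (-(c * Real.logb 2 x)) = (x ^ c)⁻¹ := by
  rw [show -(c * Real.logb 2 x) = Real.logb 2 x * -c by ring,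
    Real.rpow_mul zero_le_two, Real.rpow_logb zero_lt_two (by norm_num) hx,
    Real.rpow_neg hx.le]

lemma two_rpow_binEnt_mul {p : ℝ} (hp₀ : 0 < p) (hp₁ : p < 1) (x : ℝ) :
    (2 : ℝ) ^ (binEnt p * x) = (p ^ (p * x) * (1 - p) ^ ((1 - p) * x))⁻¹ := by
  rw [show binEnt p * x = -(p * x * Real.logb 2 p) + -((1 - p) * x * Real.logb 2 (1 - p)) by
      rw [binEnt]; ring,
    Real.rpow_add zero_lt_two, two_rpow_neg_mul_logb hp₀, two_rpow_neg_mul_logb (by linarith),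
    mul_inv]

theorem sum_choose_le_two_pow_entropy (n k : ℕ) (hk : 2 * k ≤ n) :
    ((∑ i ∈ Finset.range (k + 1), n.choose i : ℕ) : ℝ) ≤
      2 ^ (binEnt ((k : ℝ) / (n : ℝ)) * (n : ℝ)) := by
  obtain rfl | hk₀ := Nat.eq_zero_or_pos k
  · simp [binEnt]
  have hn : (0 : ℝ) < n := by exact_mod_cast (by omega : 0 < n)
  set p : ℝ := k / n
  have hp₀ : 0 < p := by positivity
  have hp_le : p ≤ 1 - p := by
    rw [le_sub_iff_add_le, ← two_mul, mul_div_assoc', div_le_one hn]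
    exact_mod_cast hk
  have hpn : p * n = k := div_mul_cancel₀ _ hn.ne'
  have hqn : (1 - p) * n = ((n - k : ℕ) : ℝ) := by
    rw [Nat.cast_sub (by omega), sub_mul, one_mul, hpn]
  rw [two_rpow_binEnt_mul hp₀ (by linarith) n, hpn, hqn, Real.rpow_natCast, Real.rpow_natCast,
    ← one_div, le_div_iff₀ (mul_pos (pow_pos hp₀ _) (pow_pos (by linarith) _)), Nat.cast_sum]
  exact sum_range_choose_mul_pow_le_one hp₀.le hp_le (by ring) (by omega)
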